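/- Let ξ₁,...,ξₙ be independent centered random variables satisfying condition (A): there exist δ ∈ (0,1] and B > 0 such that E[|ξᵢ|^{2+δ}] ≤ B^{2+δ} for all i and ∑ᵢ E[ξᵢ² e^{λξᵢ}] ≥ (1 − Bλ)∑ᵢ E[ξᵢ²] for all λ ≥ 0. Assume also ξᵢ ≤ B a.s. Then for all λ ≥ 0, B_n(λ) = ∑ᵢ E[ξᵢ e^{λξᵢ}]/E[e^{λξᵢ}] ≥ (1 − Bλ/2) λ σ² e^{−B²λ²/2}, where σ² = ∑ᵢ E[ξᵢ²]. -/

import Mathlib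

/-!
Each denominator `E e^{λξᵢ}` lies between `1` (Jensen) and `cosh (λB) ≤ e^{B²λ²/2}`; the upper
bound comes from integrating Bennett's quadratic majorant of `exp` on `(-∞, λB]` and needs
`E ξᵢ² ≤ B²`. That is Lyapunov's inequality for the `(2+δ)`-th moment, once `|ξᵢ|^{2+δ}` is known
to be integrable. Integrability comes from condition (A): the nonnegative quantities
`λ⁻¹ E[ξᵢ² (e^{λB} - e^{λξᵢ})]` stay bounded as `λ → 0⁺`, so by Fatou `E[ξᵢ² (B - ξᵢ)] < ∞`, a
finite third moment. Finally `∑ E[ξᵢ e^{λξᵢ}] = ∫₀^λ ∑ E[ξᵢ² e^{tξᵢ}] dt ≥ ∫₀^λ (1 - Bt) σ² dt`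
by Fubini and condition (A).
-/

open MeasureTheory ProbabilityTheory Real Filter Topology Set

/-- `(exp s - 1 - s) / s ^ 2`, written as an integral so that it is visibly monotone in `s`
and needs no special value at `s = 0`. -/
noncomputable def expQuadCoeff (s : ℝ) : ℝ := ∫ t in (0 : ℝ)..1, (1 - t) * exp (t * s)

lemma sq_mul_expQuadCoeff (s : ℝ) : s ^ 2 * expQuadCoeff s = exp s - 1 - s := by
  have hderiv : ∀ t ∈ uIcc (0 : ℝ) 1, HasDerivAt (fun t => exp (t * s) * (s * (1 - t) + 1))
      (s ^ 2 * ((1 - t) * exp (t * s))) t := fun t _ => by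
    refine ((hasDerivAt_mul_const s).exp.mul
      (((hasDerivAt_id t).const_sub 1).const_mul s |>.add_const 1)).congr_deriv ?_
    simp only [id]
    ring
  rw [expQuadCoeff, ← intervalIntegral.integral_const_mul,
    intervalIntegral.integral_eq_sub_of_hasDerivAt hderiv
      (by apply Continuous.intervalIntegrable; fun_prop)]
  simp
  ring

lemma expQuadCoeff_nonneg (s : ℝ) : 0 ≤ expQuadCoeff s :=
  intervalIntegral.integral_nonneg zero_le_one fun _ ht =>
    mul_nonneg (sub_nonneg.2 ht.2) (exp_pos _).le

lemma monotone_expQuadCoeff : Monotone expQuadCoeff := fun z s h =>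
  intervalIntegral.integral_mono_on zero_le_one
    (by apply Continuous.intervalIntegrable; fun_prop)
    (by apply Continuous.intervalIntegrable; fun_prop) fun t ht =>
    mul_le_mul_of_nonneg_left (exp_le_exp.2 (mul_le_mul_of_nonneg_left h ht.1))
      (sub_nonneg.2 ht.2)

lemma exp_le_one_add_add_sq_mul_expQuadCoeff {x s : ℝ} (h : x ≤ s) :
    exp x ≤ 1 + x + x ^ 2 * expQuadCoeff s := by
  nlinarith [sq_mul_expQuadCoeff x,
    mul_le_mul_of_nonneg_left (monotone_expQuadCoeff h) (sq_nonneg x)]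

/-- Bennett's quadratic majorant of `exp` on `(-∞, u]`: tangent to `exp` at `-u`, equal to it
at `u`. -/
lemma exp_le_bennettQuadratic {y u : ℝ} (hy : y ≤ u) :
    exp y ≤ exp (-u) * (1 + (y + u) + (y + u) ^ 2 * expQuadCoeff (2 * u)) := by
  calc exp y = exp (-u) * exp (y + u) := by rw [← exp_add]; ring_nf
    _ ≤ _ := by gcongr; exact exp_le_one_add_add_sq_mul_expQuadCoeff (by linarith)

lemma exp_neg_mul_bennettQuadratic_eq_cosh (u : ℝ) :
    exp (-u) * (1 + u + 2 * u ^ 2 * expQuadCoeff (2 * u)) = cosh u := by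
  have h := sq_mul_expQuadCoeff (2 * u)
  have h2 : 2 * u ^ 2 * expQuadCoeff (2 * u) = (exp (2 * u) - 1 - 2 * u) / 2 := by linarith
  rw [h2, cosh_eq, show 2 * u = u + u by ring, exp_add, exp_neg]
  field_simp
  ring

lemma le_mul_exp_mul {l : ℝ} (hl : 0 ≤ l) (x : ℝ) : x ≤ x * exp (l * x) := by
  rcases le_total 0 x with hx | hx
  · exact le_mul_of_one_le_right hx (one_le_exp (mul_nonneg hl hx))
  · nlinarith [exp_le_one_iff.2 (mul_nonpos_of_nonneg_of_nonpos hl hx)]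

lemma exp_mul_le_one_add_exp_mul {t l : ℝ} (ht : 0 ≤ t) (htl : t ≤ l) (x : ℝ) :
    exp (t * x) ≤ 1 + exp (l * x) := by
  rcases le_total 0 x with hx | hx
  · linarith [exp_le_exp.2 (mul_le_mul_of_nonneg_right htl hx)]
  · linarith [exp_le_one_iff.2 (mul_nonpos_of_nonneg_of_nonpos ht hx), exp_pos (l * x)]

lemma setIntegral_Ioc_sq_mul_exp_mul {l : ℝ} (hl : 0 ≤ l) (x : ℝ) :
    ∫ t in Ioc 0 l, x ^ 2 * exp (t * x) = x * exp (l * x) - x := by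
  have hderiv : ∀ t ∈ uIcc 0 l, HasDerivAt (fun t => x * exp (t * x)) (x ^ 2 * exp (t * x)) t :=
    fun t _ => ((hasDerivAt_mul_const x).exp.const_mul x).congr_deriv (by ring)
  rw [← intervalIntegral.integral_of_le hl, intervalIntegral.integral_eq_sub_of_hasDerivAt hderiv
    (by apply Continuous.intervalIntegrable; fun_prop)]
  simp

section Moments

variable {Ω : Type*} [MeasurableSpace Ω] {μ : Measure Ω} {f : Ω → ℝ}

lemma integrable_of_tendsto_of_integral_le {ι : Type*} {u : Filter ι} [u.IsCountablyGenerated]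
    [u.NeBot] {g : ι → Ω → ℝ} {G : Ω → ℝ} {C : ℝ} (hG : AEStronglyMeasurable G μ)
    (hg_meas : ∀ i, AEStronglyMeasurable (g i) μ)
    (hg : ∀ᶠ i in u, Integrable (g i) μ ∧ 0 ≤ᵐ[μ] g i ∧ ∫ ω, g i ω ∂μ ≤ C)
    (hlim : ∀ᵐ ω ∂μ, Tendsto (fun i => g i ω) u (𝓝 (G ω))) : Integrable G μ := by
  refine ⟨hG, lt_of_le_of_lt ?_ (ENNReal.ofReal_lt_top (r := C))⟩
  calc ∫⁻ ω, ‖G ω‖ₑ ∂μ = ∫⁻ ω, liminf (fun i => ‖g i ω‖ₑ) u ∂μ :=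
        lintegral_congr_ae (by filter_upwards [hlim] with ω hω using hω.enorm.liminf_eq.symm)
    _ ≤ liminf (fun i => ∫⁻ ω, ‖g i ω‖ₑ ∂μ) u :=
        lintegral_liminf_le' fun i => (hg_meas i).enorm
    _ ≤ ENNReal.ofReal C := by
        refine liminf_le_of_frequently_le' (hg.mono fun i ⟨hint, hnonneg, hle⟩ => ?_).frequently
        rw [← ofReal_integral_norm_eq_lintegral_enorm hint]
        refine ENNReal.ofReal_le_ofReal (le_of_eq_of_le ?_ hle)
        exact integral_congr_ae (by filter_upwards [hnonneg] with ω hω using norm_of_nonneg hω)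

/-- `f² (B - f)` is the limit as `l → 0⁺` of `l⁻¹ f² (exp (l B) - exp (l f)) ≥ 0`; apply Fatou. -/
lemma integrable_sq_mul_sub_of_integral_sq_mul_exp_sub_le {B C : ℝ}
    (hf : AEStronglyMeasurable f μ) (hbdd : ∀ᵐ ω ∂μ, f ω ≤ B)
    (hint2 : Integrable (fun ω => f ω ^ 2) μ)
    (hintx2e : ∀ l ∈ Ioc (0 : ℝ) 1, Integrable (fun ω => f ω ^ 2 * exp (l * f ω)) μ)
    (hC : ∀ l ∈ Ioc (0 : ℝ) 1, ∫ ω, f ω ^ 2 * (exp (l * B) - exp (l * f ω)) ∂μ ≤ C * l) :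
    Integrable (fun ω => f ω ^ 2 * (B - f ω)) μ := by
  refine integrable_of_tendsto_of_integral_le (u := 𝓝[>] (0 : ℝ))
    (g := fun l ω => l⁻¹ * (f ω ^ 2 * (exp (l * B) - exp (l * f ω)))) (C := C)
    (by fun_prop) (fun l => by fun_prop) ?_ ?_
  · filter_upwards [Ioc_mem_nhdsGT one_pos] with l hl
    refine ⟨(((hint2.const_mul (exp (l * B))).sub (hintx2e l hl)).const_mul l⁻¹).congr
      (ae_of_all _ fun ω => by simp only [Pi.sub_apply]; ring), ?_, ?_⟩
    · filter_upwards [hbdd] with ω hω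
      exact mul_nonneg (inv_nonneg.2 hl.1.le) (mul_nonneg (sq_nonneg _)
        (sub_nonneg.2 (exp_le_exp.2 (mul_le_mul_of_nonneg_left hω hl.1.le))))
    · rw [integral_const_mul, inv_mul_le_iff₀ hl.1, mul_comm l C]
      exact hC l hl
  · filter_upwards with ω
    have hexp : ∀ c : ℝ, HasDerivAt (fun l => exp (l * c)) c 0 := fun c => by
      simpa using (hasDerivAt_mul_const c).exp (x := 0)
    simpa using (((hexp B).sub (hexp (f ω))).const_mul (f ω ^ 2)).tendsto_slope_zero_right

lemma integrable_abs_rpow_of_integrable_sq_mul_sub [IsFiniteMeasure μ] {B p : ℝ}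
    (hf : AEStronglyMeasurable f μ) (hp : 0 ≤ p) (hp3 : p ≤ 3)
    (hint2 : Integrable (fun ω => f ω ^ 2) μ)
    (hint3 : Integrable (fun ω => f ω ^ 2 * (B - f ω)) μ) :
    Integrable (fun ω => |f ω| ^ p) μ := by
  have hcube : Integrable (fun ω => ‖f ω‖ ^ (3 : ℝ)) μ := by
    refine ((hint2.const_mul B).sub hint3).abs.congr (ae_of_all _ fun ω => ?_)
    simp only [Pi.sub_apply, norm_eq_abs]
    rw [show (3 : ℝ) = (3 : ℕ) by norm_num, rpow_natCast, ← abs_pow]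
    ring_nf
  simpa using integrable_norm_rpow_of_le hf hp (by norm_num) hp3 hcube

/-- Lyapunov's inequality, proved pointwise by Young's inequality
`|x|^p ≤ (p/q) |x|^q B^(p-q) + (1 - p/q) B^p`. -/
lemma integral_abs_rpow_le_of_integral_abs_rpow_le [IsProbabilityMeasure μ] {p q B : ℝ}
    (hp : 0 < p) (hpq : p ≤ q) (hB : 0 < B) (hint : Integrable (fun ω => |f ω| ^ q) μ)
    (hmom : ∫ ω, |f ω| ^ q ∂μ ≤ B ^ q) :
    ∫ ω, |f ω| ^ p ∂μ ≤ B ^ p := by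
  have hq : 0 < q := hp.trans_le hpq
  have hw : p / q + (1 - p / q) = 1 := by ring
  have hw₁ : 0 ≤ p / q := by positivity
  have hw₂ : 0 ≤ 1 - p / q := by rw [sub_nonneg, div_le_one hq]; exact hpq
  have hyoung : ∀ x : ℝ, |x| ^ p ≤ p / q * (|x| ^ q * B ^ (p - q)) + (1 - p / q) * B ^ p := by
    intro x
    refine le_of_eq_of_le ?_ (geom_mean_le_arith_mean2_weighted hw₁ hw₂ (by positivity)
      (by positivity) hw)
    rw [mul_rpow (by positivity) (by positivity), ← rpow_mul (abs_nonneg x), ← rpow_mul hB.le,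
      ← rpow_mul hB.le, mul_assoc, ← rpow_add hB]
    field_simp
    ring_nf
    simp
  calc ∫ ω, |f ω| ^ p ∂μ
      ≤ ∫ ω, (p / q * (|f ω| ^ q * B ^ (p - q)) + (1 - p / q) * B ^ p) ∂μ :=
        integral_mono_of_nonneg (ae_of_all _ fun ω => by positivity)
          (((hint.mul_const _).const_mul _).add (integrable_const _))
          (ae_of_all _ fun ω => hyoung _)
    _ = p / q * ((∫ ω, |f ω| ^ q ∂μ) * B ^ (p - q)) + (1 - p / q) * B ^ p := by
        rw [integral_add ((hint.mul_const _).const_mul _) (integrable_const _), integral_const_mul,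
          integral_mul_const]
        simp
    _ ≤ p / q * (B ^ q * B ^ (p - q)) + (1 - p / q) * B ^ p := by gcongr
    _ = B ^ p := by rw [← rpow_add hB]; ring_nf

lemma integral_exp_mul_le_cosh [IsProbabilityMeasure μ] {B l : ℝ} (hl : 0 ≤ l)
    (hbdd : ∀ᵐ ω ∂μ, f ω ≤ B) (hint : Integrable f μ) (hmean : ∫ ω, f ω ∂μ = 0)
    (hint2 : Integrable (fun ω => f ω ^ 2) μ) (hvar : ∫ ω, f ω ^ 2 ∂μ ≤ B ^ 2)
    (hinte : Integrable (fun ω => exp (l * f ω)) μ) :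
    ∫ ω, exp (l * f ω) ∂μ ≤ cosh (l * B) := by
  set u := l * B
  set g := expQuadCoeff (2 * u)
  have hc : 0 ≤ exp (-u) * l ^ 2 * g := by have := expQuadCoeff_nonneg (2 * u); positivity
  have hmaj : ∀ᵐ ω ∂μ, exp (l * f ω) ≤ exp (-u) * (1 + u + u ^ 2 * g)
      + exp (-u) * (l + 2 * l * u * g) * f ω + exp (-u) * l ^ 2 * g * f ω ^ 2 := by
    filter_upwards [hbdd] with ω hω
    exact (exp_le_bennettQuadratic (mul_le_mul_of_nonneg_left hω hl)).trans_eq (by ring)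
  have hlin : Integrable (fun ω => exp (-u) * (1 + u + u ^ 2 * g)
      + exp (-u) * (l + 2 * l * u * g) * f ω) μ := (integrable_const _).add (hint.const_mul _)
  calc ∫ ω, exp (l * f ω) ∂μ
      ≤ ∫ ω, (exp (-u) * (1 + u + u ^ 2 * g) + exp (-u) * (l + 2 * l * u * g) * f ω
          + exp (-u) * l ^ 2 * g * f ω ^ 2) ∂μ :=
        integral_mono_ae hinte (hlin.add (hint2.const_mul _)) hmaj
    _ = exp (-u) * (1 + u + u ^ 2 * g) + exp (-u) * l ^ 2 * g * ∫ ω, f ω ^ 2 ∂μ := by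
        rw [integral_add hlin (hint2.const_mul _),
          integral_add (integrable_const _) (hint.const_mul _), integral_const_mul,
          integral_const_mul, integral_const_mul, hmean]
        simp
    _ ≤ exp (-u) * (1 + u + u ^ 2 * g) + exp (-u) * l ^ 2 * g * B ^ 2 := by gcongr
    _ = cosh u := by rw [← exp_neg_mul_bennettQuadratic_eq_cosh]; ring

lemma one_le_integral_exp_mul [IsProbabilityMeasure μ] (l : ℝ) (hint : Integrable f μ)
    (hmean : ∫ ω, f ω ∂μ = 0) (hinte : Integrable (fun ω => exp (l * f ω)) μ) :
    1 ≤ ∫ ω, exp (l * f ω) ∂μ :=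
  calc (1 : ℝ) = ∫ ω, (1 + l * f ω) ∂μ := by
        rw [integral_add (integrable_const _) (hint.const_mul _), integral_const_mul, hmean]
        simp
    _ ≤ ∫ ω, exp (l * f ω) ∂μ :=
        integral_mono ((integrable_const _).add (hint.const_mul _)) hinte fun ω => by
          linarith [add_one_le_exp (l * f ω)]

lemma integral_mul_exp_mul_nonneg {l : ℝ} (hl : 0 ≤ l) (hint : Integrable f μ)
    (hmean : ∫ ω, f ω ∂μ = 0) (hintxe : Integrable (fun ω => f ω * exp (l * f ω)) μ) :
    0 ≤ ∫ ω, f ω * exp (l * f ω) ∂μ :=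
  hmean ▸ integral_mono hint hintxe fun ω => le_mul_exp_mul hl (f ω)

lemma integrable_prod_sq_mul_exp_mul [SFinite μ] {l : ℝ} (hf : AEStronglyMeasurable f μ)
    (hint2 : Integrable (fun ω => f ω ^ 2) μ)
    (hintx2e : Integrable (fun ω => f ω ^ 2 * exp (l * f ω)) μ) :
    Integrable (Function.uncurry fun t ω => f ω ^ 2 * exp (t * f ω))
      ((volume.restrict (Ioc 0 l)).prod μ) := by
  have hmeas : AEStronglyMeasurable (Function.uncurry fun t ω => f ω ^ 2 * exp (t * f ω))
      ((volume.restrict (Ioc 0 l)).prod μ) := by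
    have := hf.comp_snd (μ := volume.restrict (Ioc 0 l))
    exact (this.pow 2).mul (continuous_exp.comp_aestronglyMeasurable
      (measurable_fst.aestronglyMeasurable.mul this))
  have hdom : ∀ t ∈ Ioc 0 l, ∀ ω, ‖f ω ^ 2 * exp (t * f ω)‖ ≤ f ω ^ 2 + f ω ^ 2 * exp (l * f ω) :=
    fun t ht ω => by
      rw [norm_of_nonneg (by positivity), ← mul_one_add]
      exact mul_le_mul_of_nonneg_left (exp_mul_le_one_add_exp_mul ht.1.le ht.2 _) (sq_nonneg _)
  have : IsFiniteMeasure (volume.restrict (Ioc (0 : ℝ) l)) := by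
    rw [isFiniteMeasure_restrict]; simp
  refine (integrable_prod_iff hmeas).2 ⟨?_, ?_⟩
  · filter_upwards [ae_restrict_mem measurableSet_Ioc] with t ht
    exact (hint2.add hintx2e).mono' (by fun_prop) (ae_of_all _ (hdom t ht))
  · refine (integrable_const (∫ ω, (f ω ^ 2 + f ω ^ 2 * exp (l * f ω)) ∂μ)).mono'
      hmeas.norm.integral_prod_right' ?_
    filter_upwards [ae_restrict_mem measurableSet_Ioc] with t ht
    rw [norm_of_nonneg (integral_nonneg fun ω => norm_nonneg _)]
    exact integral_mono_of_nonneg (ae_of_all _ fun ω => norm_nonneg _) (hint2.add hintx2e)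
      (ae_of_all _ (hdom t ht))

lemma setIntegral_Ioc_integral_sq_mul_exp_mul [SFinite μ] {l : ℝ} (hl : 0 ≤ l)
    (hint : Integrable f μ)
    (hint2 : Integrable (fun ω => f ω ^ 2) μ)
    (hintxe : Integrable (fun ω => f ω * exp (l * f ω)) μ)
    (hintx2e : Integrable (fun ω => f ω ^ 2 * exp (l * f ω)) μ) :
    ∫ t in Ioc 0 l, ∫ ω, f ω ^ 2 * exp (t * f ω) ∂μ
      = ∫ ω, f ω * exp (l * f ω) ∂μ - ∫ ω, f ω ∂μ := by
  rw [integral_integral_swap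
    (integrable_prod_sq_mul_exp_mul hint.aestronglyMeasurable hint2 hintx2e)]
  simp_rw [setIntegral_Ioc_sq_mul_exp_mul hl]
  exact integral_sub hintxe hint

end Moments

section Family

variable {Ω ι : Type*} [MeasurableSpace Ω] {μ : Measure Ω} [Fintype ι] {ξ : ι → Ω → ℝ}

lemma le_sum_integral_mul_exp_mul [SFinite μ] {B l : ℝ} (hl : 0 ≤ l)
    (hint : ∀ i, Integrable (ξ i) μ) (hmean : ∀ i, ∫ ω, ξ i ω ∂μ = 0)
    (hint2 : ∀ i, Integrable (fun ω => ξ i ω ^ 2) μ)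
    (hintxe : ∀ i, Integrable (fun ω => ξ i ω * exp (l * ξ i ω)) μ)
    (hintx2e : ∀ i, Integrable (fun ω => ξ i ω ^ 2 * exp (l * ξ i ω)) μ)
    (hA : ∀ t ∈ Ioc 0 l, (1 - B * t) * ∑ i, ∫ ω, ξ i ω ^ 2 ∂μ
      ≤ ∑ i, ∫ ω, ξ i ω ^ 2 * exp (t * ξ i ω) ∂μ) :
    (1 - B * l / 2) * l * ∑ i, ∫ ω, ξ i ω ^ 2 ∂μ ≤ ∑ i, ∫ ω, ξ i ω * exp (l * ξ i ω) ∂μ := by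
  set S := ∑ i, ∫ ω, ξ i ω ^ 2 ∂μ
  have hon : ∀ i, IntegrableOn (fun t => ∫ ω, ξ i ω ^ 2 * exp (t * ξ i ω) ∂μ) (Ioc 0 l) :=
    fun i => (integrable_prod_sq_mul_exp_mul (hint i).aestronglyMeasurable (hint2 i)
      (hintx2e i)).integral_prod_left
  calc (1 - B * l / 2) * l * S = ∫ t in Ioc 0 l, (1 - B * t) * S := by
        rw [← intervalIntegral.integral_of_le hl, intervalIntegral.integral_mul_const,
          intervalIntegral.integral_sub intervalIntegrable_const
            (intervalIntegral.intervalIntegrable_id.const_mul B),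
          intervalIntegral.integral_const_mul, integral_id, intervalIntegral.integral_const,
          smul_eq_mul]
        ring
    _ ≤ ∫ t in Ioc 0 l, ∑ i, ∫ ω, ξ i ω ^ 2 * exp (t * ξ i ω) ∂μ :=
        setIntegral_mono_on (Continuous.integrableOn_Ioc (by fun_prop))
          (integrable_finsetSum _ fun i _ => hon i) measurableSet_Ioc hA
    _ = ∑ i, ∫ ω, ξ i ω * exp (l * ξ i ω) ∂μ := by
        rw [integral_finsetSum _ fun i _ => hon i]
        refine Finset.sum_congr rfl fun i _ => ?_
        rw [setIntegral_Ioc_integral_sq_mul_exp_mul hl (hint i) (hint2 i) (hintxe i)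
          (hintx2e i), hmean i, sub_zero]

lemma integral_sq_mul_exp_sub_le {B l : ℝ} (hl : 0 ≤ l) (hbdd : ∀ i, ∀ᵐ ω ∂μ, ξ i ω ≤ B)
    (hint2 : ∀ i, Integrable (fun ω => ξ i ω ^ 2) μ)
    (hintx2e : ∀ i, Integrable (fun ω => ξ i ω ^ 2 * exp (l * ξ i ω)) μ)
    (hA : (1 - B * l) * ∑ i, ∫ ω, ξ i ω ^ 2 ∂μ ≤ ∑ i, ∫ ω, ξ i ω ^ 2 * exp (l * ξ i ω) ∂μ)
    (i : ι) :
    ∫ ω, ξ i ω ^ 2 * (exp (l * B) - exp (l * ξ i ω)) ∂μ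
      ≤ (exp (l * B) - 1 + B * l) * ∑ j, ∫ ω, ξ j ω ^ 2 ∂μ := by
  have hsplit : ∀ j, ∫ ω, ξ j ω ^ 2 * (exp (l * B) - exp (l * ξ j ω)) ∂μ
      = exp (l * B) * ∫ ω, ξ j ω ^ 2 ∂μ - ∫ ω, ξ j ω ^ 2 * exp (l * ξ j ω) ∂μ := fun j => by
    simp_rw [mul_sub]
    rw [integral_sub ((hint2 j).mul_const _) (hintx2e j), integral_mul_const, mul_comm]
  have hnonneg : ∀ j, 0 ≤ ∫ ω, ξ j ω ^ 2 * (exp (l * B) - exp (l * ξ j ω)) ∂μ := fun j =>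
    integral_nonneg_of_ae <| by
      filter_upwards [hbdd j] with ω hω
      exact mul_nonneg (sq_nonneg _) (sub_nonneg.2 (exp_le_exp.2 (mul_le_mul_of_nonneg_left hω hl)))
  calc ∫ ω, ξ i ω ^ 2 * (exp (l * B) - exp (l * ξ i ω)) ∂μ
      ≤ ∑ j, ∫ ω, ξ j ω ^ 2 * (exp (l * B) - exp (l * ξ j ω)) ∂μ :=
        Finset.single_le_sum (fun j _ => hnonneg j) (Finset.mem_univ i)
    _ = exp (l * B) * ∑ j, ∫ ω, ξ j ω ^ 2 ∂μ - ∑ j, ∫ ω, ξ j ω ^ 2 * exp (l * ξ j ω) ∂μ := by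
        simp_rw [hsplit, Finset.sum_sub_distrib, Finset.mul_sum]
    _ ≤ _ := by linarith

lemma integral_sq_le_of_integral_abs_rpow_le [IsProbabilityMeasure μ] {B δ : ℝ} (hB : 0 < B)
    (hδ : δ ∈ Ioc (0 : ℝ) 1) (hξ : ∀ i, AEStronglyMeasurable (ξ i) μ)
    (hbdd : ∀ i, ∀ᵐ ω ∂μ, ξ i ω ≤ B) (hint2 : ∀ i, Integrable (fun ω => ξ i ω ^ 2) μ)
    (hintx2e : ∀ i, ∀ l : ℝ, 0 ≤ l → Integrable (fun ω => ξ i ω ^ 2 * exp (l * ξ i ω)) μ)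
    (hA : ∀ l : ℝ, 0 ≤ l → (1 - B * l) * ∑ i, ∫ ω, ξ i ω ^ 2 ∂μ
      ≤ ∑ i, ∫ ω, ξ i ω ^ 2 * exp (l * ξ i ω) ∂μ)
    (i : ι) (hmom : ∫ ω, |ξ i ω| ^ (2 + δ) ∂μ ≤ B ^ (2 + δ)) :
    ∫ ω, ξ i ω ^ 2 ∂μ ≤ B ^ 2 := by
  have hS : 0 ≤ ∑ j, ∫ ω, ξ j ω ^ 2 ∂μ :=
    Finset.sum_nonneg fun j _ => integral_nonneg fun ω => sq_nonneg _
  -- `hmom` alone says nothing: a non-integrable `|ξ i| ^ (2 + δ)` has Bochner integral `0`.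
  have hcube : Integrable (fun ω => ξ i ω ^ 2 * (B - ξ i ω)) μ := by
    refine integrable_sq_mul_sub_of_integral_sq_mul_exp_sub_le
      (C := (exp B - 1 + B) * ∑ j, ∫ ω, ξ j ω ^ 2 ∂μ) (hξ i) (hbdd i) (hint2 i)
      (fun l hl => hintx2e i l hl.1.le) fun l hl => ?_
    have hconv : exp (l * B) ≤ 1 + l * (exp B - 1) := by
      have := convexOn_exp.2 (mem_univ 0) (mem_univ B) (sub_nonneg.2 hl.2) hl.1.le
        (sub_add_cancel 1 l)
      simp only [smul_eq_mul, mul_zero, zero_add, exp_zero, mul_one] at this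
      linarith
    refine (integral_sq_mul_exp_sub_le hl.1.le hbdd hint2 (fun j => hintx2e j l hl.1.le)
      (hA l hl.1.le) i).trans ?_
    nlinarith
  have hint_mom := integrable_abs_rpow_of_integrable_sq_mul_sub (p := 2 + δ) (hξ i)
    (by linarith [hδ.1]) (by linarith [hδ.2]) (hint2 i) hcube
  have := integral_abs_rpow_le_of_integral_abs_rpow_le two_pos (by linarith [hδ.1]) hB
    hint_mom hmom
  simpa [rpow_two] using this

end Family

theorem tilted_mean_lower_bound_general {Ω : Type*} [MeasurableSpace Ω] (μ : Measure Ω)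
    [IsProbabilityMeasure μ] (n : ℕ) (ξ : Fin n → Ω → ℝ) (B δ : ℝ) (hB : 0 < B)
    (hδ : δ ∈ Set.Ioc (0 : ℝ) 1)
    (hint : ∀ i, Integrable (ξ i) μ) (hmean : ∀ i, ∫ ω, ξ i ω ∂μ = 0)
    (hbdd : ∀ i, ∀ᵐ ω ∂μ, ξ i ω ≤ B)
    (hmom : ∀ i, ∫ ω, |ξ i ω| ^ (2 + δ) ∂μ ≤ B ^ (2 + δ))
    (hint2 : ∀ i, Integrable (fun ω => (ξ i ω) ^ 2) μ)
    (hinte : ∀ i, ∀ l : ℝ, 0 ≤ l → Integrable (fun ω => Real.exp (l * ξ i ω)) μ)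
    (hintxe : ∀ i, ∀ l : ℝ, 0 ≤ l →
      Integrable (fun ω => ξ i ω * Real.exp (l * ξ i ω)) μ)
    (hintx2e : ∀ i, ∀ l : ℝ, 0 ≤ l →
      Integrable (fun ω => (ξ i ω) ^ 2 * Real.exp (l * ξ i ω)) μ)
    (hA : ∀ l : ℝ, 0 ≤ l →
      (1 - B * l) * ∑ i, ∫ ω, (ξ i ω) ^ 2 ∂μ
        ≤ ∑ i, ∫ ω, (ξ i ω) ^ 2 * Real.exp (l * ξ i ω) ∂μ) :
    ∀ l : ℝ, 0 ≤ l →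
      (1 - B * l / 2) * l * (∑ i, ∫ ω, (ξ i ω) ^ 2 ∂μ) * Real.exp (-(B ^ 2 * l ^ 2) / 2)
        ≤ ∑ i, (∫ ω, ξ i ω * Real.exp (l * ξ i ω) ∂μ) / (∫ ω, Real.exp (l * ξ i ω) ∂μ) := by
  intro l hl
  have hvar i : ∫ ω, ξ i ω ^ 2 ∂μ ≤ B ^ 2 :=
    integral_sq_le_of_integral_abs_rpow_le hB hδ (fun j => (hint j).aestronglyMeasurable) hbdd
      hint2 hintx2e hA i (hmom i)
  have hden i : ∫ ω, exp (l * ξ i ω) ∂μ ≤ exp (B ^ 2 * l ^ 2 / 2) := calc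
    _ ≤ cosh (l * B) :=
        integral_exp_mul_le_cosh hl (hbdd i) (hint i) (hmean i) (hint2 i) (hvar i) (hinte i l hl)
    _ ≤ exp ((l * B) ^ 2 / 2) := cosh_le_exp_half_sq _
    _ = exp (B ^ 2 * l ^ 2 / 2) := by ring_nf
  have hnum := le_sum_integral_mul_exp_mul hl hint hmean hint2 (hintxe · l hl)
    (hintx2e · l hl) fun t ht => hA t ht.1.le
  calc (1 - B * l / 2) * l * (∑ i, ∫ ω, ξ i ω ^ 2 ∂μ) * exp (-(B ^ 2 * l ^ 2) / 2)
      ≤ (∑ i, ∫ ω, ξ i ω * exp (l * ξ i ω) ∂μ) / exp (B ^ 2 * l ^ 2 / 2) := by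
        rw [neg_div, exp_neg, ← div_eq_mul_inv]
        gcongr
    _ = ∑ i, (∫ ω, ξ i ω * exp (l * ξ i ω) ∂μ) / exp (B ^ 2 * l ^ 2 / 2) := Finset.sum_div _ _ _
    _ ≤ _ := Finset.sum_le_sum fun i _ => div_le_div_of_nonneg_left
        (integral_mul_exp_mul_nonneg hl (hint i) (hmean i) (hintxe i l hl))
        (zero_lt_one.trans_le (one_le_integral_exp_mul l (hint i) (hmean i) (hinte i l hl)))
        (hden i)

/-- Lower bound on the tilted mean `B_n(λ)` under condition (A). -/
theorem tilted_mean_lower_bound {Ω : Type*} [MeasurableSpace Ω] (μ : Measure Ω)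
    [IsProbabilityMeasure μ] (n : ℕ) (ξ : Fin n → Ω → ℝ) (B δ : ℝ) (hB : 0 < B)
    (hδ : δ ∈ Set.Ioc (0 : ℝ) 1)
    (hmeas : ∀ i, Measurable (ξ i))
    (hindep : iIndepFun ξ μ)
    (hint : ∀ i, Integrable (ξ i) μ) (hmean : ∀ i, ∫ ω, ξ i ω ∂μ = 0)
    (hbdd : ∀ i, ∀ᵐ ω ∂μ, ξ i ω ≤ B)
    (hmom : ∀ i, ∫ ω, |ξ i ω| ^ (2 + δ) ∂μ ≤ B ^ (2 + δ))
    (hint2 : ∀ i, Integrable (fun ω => (ξ i ω) ^ 2) μ)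
    (hinte : ∀ i, ∀ l : ℝ, 0 ≤ l → Integrable (fun ω => Real.exp (l * ξ i ω)) μ)
    (hintxe : ∀ i, ∀ l : ℝ, 0 ≤ l →
      Integrable (fun ω => ξ i ω * Real.exp (l * ξ i ω)) μ)
    (hintx2e : ∀ i, ∀ l : ℝ, 0 ≤ l →
      Integrable (fun ω => (ξ i ω) ^ 2 * Real.exp (l * ξ i ω)) μ)
    (hA : ∀ l : ℝ, 0 ≤ l →
      (1 - B * l) * ∑ i, ∫ ω, (ξ i ω) ^ 2 ∂μ
        ≤ ∑ i, ∫ ω, (ξ i ω) ^ 2 * Real.exp (l * ξ i ω) ∂μ) :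
    ∀ l : ℝ, 0 ≤ l →
      (1 - B * l / 2) * l * (∑ i, ∫ ω, (ξ i ω) ^ 2 ∂μ) * Real.exp (-(B ^ 2 * l ^ 2) / 2)
        ≤ ∑ i, (∫ ω, ξ i ω * Real.exp (l * ξ i ω) ∂μ) / (∫ ω, Real.exp (l * ξ i ω) ∂μ) :=
  tilted_mean_lower_bound_general μ n ξ B δ hB hδ hint hmean hbdd hmom hint2 hinte hintxe hintx2e hA
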